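/- arXiv:1603.01306 — 4 statements merged into one kernel-verified Lean document; each statement's English description precedes it below -/
import Mathlib

section
/- Let N ≥ 10 be an integer with N ≡ 4 (mod 6), and suppose π/3 ≤ θ ≤ (π/3)(1 + 1/(2N)). Then 1/2 ≤ |cos(Nθ/2)| ≤ 1/√2. -/
/-! For `N = 6k + 4` the window for `θ` puts `Nθ/2` in `[kπ + 2π/3, kπ + 3π/4]`, and on
`[2π/3, 3π/4]` the cosine decreases from `-1/2` to `-1/√2`. -/

open Real

theorem abs_cos_add_nat_mul_pi (x : ℝ) (n : ℕ) : |cos (x + n * π)| = |cos x| := by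
  simp [cos_add_nat_mul_pi, abs_mul]

theorem abs_cos_mem_Icc_of_mem_Icc {y : ℝ} (hy : y ∈ Set.Icc (2 * π / 3) (3 * π / 4)) :
    1 / 2 ≤ |cos y| ∧ |cos y| ≤ 1 / √2 := by
  obtain ⟨hlo, hhi⟩ := hy
  have hπ := pi_pos
  have hcos_lo : cos (3 * π / 4) ≤ cos y :=
    cos_le_cos_of_nonneg_of_le_pi (by linarith) (by linarith) hhi
  have hcos_hi : cos y ≤ cos (2 * π / 3) :=
    cos_le_cos_of_nonneg_of_le_pi (by linarith) (by linarith) hlo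
  have h23 : cos (2 * π / 3) = -(1 / 2) := by
    rw [show 2 * π / 3 = π - π / 3 by ring, cos_pi_sub, cos_pi_div_three]
  have h34 : cos (3 * π / 4) = -(1 / √2) := by
    rw [show 3 * π / 4 = π - π / 4 by ring, cos_pi_sub, cos_pi_div_four, ← sqrt_div_self']
  rw [abs_of_nonpos (by linarith)]
  constructor <;> linarith

theorem mul_div_two_mem_Icc {N θ : ℝ} (hN : 0 < N) (h1 : π / 3 ≤ θ)
    (h2 : θ ≤ (π / 3) * (1 + 1 / (2 * N))) :
    N * θ / 2 ∈ Set.Icc (N * π / 6) (N * π / 6 + π / 12) := by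
  have h2' : N * θ ≤ N * π / 3 + π / 6 := by
    calc N * θ ≤ N * ((π / 3) * (1 + 1 / (2 * N))) := by gcongr
      _ = N * π / 3 + π / 6 := by field_simp; ring
  constructor <;> nlinarith

theorem stmt_1_general (N : ℕ) (hmod : N % 6 = 4) (θ : ℝ)
    (h1 : π / 3 ≤ θ) (h2 : θ ≤ (π / 3) * (1 + 1 / (2 * N))) :
    1 / 2 ≤ |Real.cos (N * θ / 2)| ∧ |Real.cos (N * θ / 2)| ≤ 1 / Real.sqrt 2 := by
  set k := N / 6
  have hNk : (N : ℝ) = 6 * k + 4 := by exact_mod_cast (by omega : N = 6 * k + 4)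
  obtain ⟨hlo, hhi⟩ := mul_div_two_mem_Icc (by rw [hNk]; positivity) h1 h2
  rw [← sub_add_cancel (N * θ / 2 : ℝ) (k * π), abs_cos_add_nat_mul_pi]
  apply abs_cos_mem_Icc_of_mem_Icc
  have hNπ : (N : ℝ) * π / 6 = k * π + 2 * π / 3 := by rw [hNk]; ring
  constructor <;> linarith

theorem stmt_1 (N : ℕ) (hN : 10 ≤ N) (hmod : N % 6 = 4) (θ : ℝ)
    (h1 : π / 3 ≤ θ) (h2 : θ ≤ (π / 3) * (1 + 1 / (2 * N))) :
    1 / 2 ≤ |Real.cos (N * θ / 2)| ∧ |Real.cos (N * θ / 2)| ≤ 1 / Real.sqrt 2 :=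
  stmt_1_general N hmod θ h1 h2
end

section
/- The function X ↦ (2 sin(π/6 + π/X))^{-X} is monotonically decreasing for real X > 6/5. -/
/-!
Put `F u = log (2 sin u)`. As `sin` is concave and positive on `(0, π)` and `log` is concave and
increasing, `F` is strictly concave there, and `F (π/6) = 0`. Hence the secant slope
`t ↦ F (π/6 + t) / t` decreases on `(0, 5π/6)`. Substituting `t = π / X` shows that
`X * F (π/6 + π/X) = π * F (π/6 + t) / t` increases for `X > 6/5`, and the function in question is
`exp (-X * F (π/6 + π/X))`.
-/

open Real Set

theorem strictConcaveOn_log_sin : StrictConcaveOn ℝ (Ioo 0 π) (fun u => log (sin u)) := by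
  have hsin : StrictConcaveOn ℝ (Ioo 0 π) sin :=
    strictConcaveOn_sin_Icc.subset Ioo_subset_Icc_self (convex_Ioo 0 π)
  have himage : sin '' Ioo 0 π ⊆ Ioi 0 := by
    rintro _ ⟨u, hu, rfl⟩
    exact sin_pos_of_pos_of_lt_pi hu.1 hu.2
  have hconvex : Convex ℝ (sin '' Ioo 0 π) :=
    (isPreconnected_Ioo.image _ continuous_sin.continuousOn).ordConnected.convex
  exact (strictConcaveOn_log_Ioi.concaveOn.subset himage hconvex).comp_strictConcaveOn hsin
    (strictMonoOn_log.mono himage)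

theorem pi_div_six_add_mem_Ioo {t : ℝ} (ht : t ∈ Ioo 0 (5 * π / 6)) : π / 6 + t ∈ Ioo 0 π :=
  ⟨by linarith [ht.1, pi_pos], by linarith [ht.2]⟩

theorem pi_div_mem_Ioo {X : ℝ} (hX : X ∈ Ioi (6 / 5)) : π / X ∈ Ioo 0 (5 * π / 6) := by
  have hX0 : 0 < X := by linarith [mem_Ioi.1 hX]
  refine ⟨by positivity, ?_⟩
  rw [div_lt_iff₀ hX0]
  nlinarith [mem_Ioi.1 hX, pi_pos]

theorem strictAntiOn_log_two_mul_sin_div :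
    StrictAntiOn (fun t => log (2 * sin (π / 6 + t)) / t) (Ioo 0 (5 * π / 6)) := by
  intro s hs t ht hst
  have hπ6 : π / 6 ∈ Ioo 0 π := ⟨by positivity, by linarith [pi_pos]⟩
  have hsecant := strictConcaveOn_log_sin.secant_strict_mono hπ6 (pi_div_six_add_mem_Ioo hs)
    (pi_div_six_add_mem_Ioo ht) (by linarith [hs.1]) (by linarith [ht.1]) (by linarith)
  have hlog : ∀ r ∈ Ioo 0 (5 * π / 6),
      log (2 * sin (π / 6 + r)) = log (sin (π / 6 + r)) - log (sin (π / 6)) := by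
    intro r hr
    have hsin := sin_pos_of_pos_of_lt_pi (pi_div_six_add_mem_Ioo hr).1 (pi_div_six_add_mem_Ioo hr).2
    rw [sin_pi_div_six, log_mul two_ne_zero hsin.ne', one_div, log_inv]
    ring
  simpa [hlog s hs, hlog t ht] using hsecant

theorem strictMonoOn_mul_log_two_mul_sin :
    StrictMonoOn (fun X => X * log (2 * sin (π / 6 + π / X))) (Ioi (6 / 5)) := by
  intro X hX Y hY hXY
  have hX0 : 0 < X := by linarith [mem_Ioi.1 hX]
  have hslope := strictAntiOn_log_two_mul_sin_div (pi_div_mem_Ioo hY) (pi_div_mem_Ioo hX)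
    (div_lt_div_of_pos_left pi_pos hX0 hXY)
  have hsubst : ∀ Z, 0 < Z →
      Z * log (2 * sin (π / 6 + π / Z)) = π * (log (2 * sin (π / 6 + π / Z)) / (π / Z)) := by
    intro Z hZ
    field_simp
  dsimp only
  rw [hsubst X hX0, hsubst Y (hX0.trans hXY)]
  exact mul_lt_mul_of_pos_left hslope pi_pos

theorem stmt_2 :
    AntitoneOn (fun X : ℝ => (2 * Real.sin (π / 6 + π / X)) ^ (-X)) (Set.Ioi (6 / 5)) := by
  intro X hX Y hY hXY
  have hbase : ∀ Z ∈ Ioi (6 / 5 : ℝ), 0 < 2 * sin (π / 6 + π / Z) := fun Z hZ => by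
    have hmem := pi_div_six_add_mem_Ioo (pi_div_mem_Ioo hZ)
    have := sin_pos_of_pos_of_lt_pi hmem.1 hmem.2
    positivity
  dsimp only
  rw [rpow_def_of_pos (hbase X hX), rpow_def_of_pos (hbase Y hY), exp_le_exp, mul_neg, mul_neg,
    neg_le_neg_iff, mul_comm, mul_comm (log _)]
  exact strictMonoOn_mul_log_two_mul_sin.monotoneOn hX hY hXY
end

section
/- The function g(Y) = -log(2 sin(π/6 + Y)) + Y·cot(π/6 + Y) satisfies g(Y) ≤ 0 for all Y with 0 ≤ Y < 5π/6. -/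
/-!
The function vanishes at `0` because `2 sin (π / 6) = 1`, and its derivative is
`-Y / sin² (π / 6 + Y) ≤ 0` (the two `cot` terms cancel), so it is antitone on `[0, 5π/6)`.
-/

open Real

theorem hasDerivAt_neg_log_mul_sin_add_mul_cot {a c x : ℝ} (hc : c ≠ 0)
    (hs : sin (a + x) ≠ 0) :
    HasDerivAt (fun y => -log (c * sin (a + y)) + y * (cos (a + y) / sin (a + y)))
      (-x / sin (a + x) ^ 2) x := by
  have hshift : HasDerivAt (fun y : ℝ => a + y) 1 x := (hasDerivAt_id x).const_add a
  have hsin := hshift.sin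
  have hlog := (hsin.const_mul c).log (mul_ne_zero hc hs)
  have hcot := hshift.cos.div hsin hs
  refine (hlog.neg.add ((hasDerivAt_id x).mul hcot)).congr_deriv ?_
  have hpyth := sin_sq_add_cos_sq (a + x)
  simp only [id_eq, mul_one, one_mul, Pi.div_apply]
  field_simp
  linear_combination -x * hpyth

theorem antitoneOn_neg_log_mul_sin_add_mul_cot {a c : ℝ} (hc : c ≠ 0) (ha : 0 < a) :
    AntitoneOn (fun y => -log (c * sin (a + y)) + y * (cos (a + y) / sin (a + y)))
      (Set.Ico 0 (π - a)) := by
  have hderiv : ∀ x ∈ Set.Ico 0 (π - a), HasDerivAt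
      (fun y => -log (c * sin (a + y)) + y * (cos (a + y) / sin (a + y)))
      (-x / sin (a + x) ^ 2) x := fun x hx =>
    hasDerivAt_neg_log_mul_sin_add_mul_cot hc
      (sin_pos_of_pos_of_lt_pi (by linarith [hx.1]) (by linarith [hx.2])).ne'
  apply antitoneOn_of_deriv_nonpos (convex_Ico 0 (π - a))
  · exact fun x hx => (hderiv x hx).continuousAt.continuousWithinAt
  · rw [interior_Ico]
    exact fun x hx =>
      (hderiv x (Set.Ioo_subset_Ico_self hx)).differentiableAt.differentiableWithinAt
  · rw [interior_Ico]
    intro x hx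
    rw [(hderiv x (Set.Ioo_subset_Ico_self hx)).deriv]
    exact div_nonpos_of_nonpos_of_nonneg (by linarith [hx.1]) (sq_nonneg _)

theorem stmt_3 (Y : ℝ) (h0 : 0 ≤ Y) (h1 : Y < 5 * π / 6) :
    -Real.log (2 * Real.sin (π / 6 + Y)) +
      Y * (Real.cos (π / 6 + Y) / Real.sin (π / 6 + Y)) ≤ 0 := by
  have hY : Y ∈ Set.Ico 0 (π - π / 6) := ⟨h0, by linarith⟩
  have h0mem : (0 : ℝ) ∈ Set.Ico 0 (π - π / 6) := ⟨le_rfl, by linarith [pi_pos]⟩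
  calc -log (2 * sin (π / 6 + Y)) + Y * (cos (π / 6 + Y) / sin (π / 6 + Y))
      ≤ -log (2 * sin (π / 6 + 0)) + 0 * (cos (π / 6 + 0) / sin (π / 6 + 0)) :=
        antitoneOn_neg_log_mul_sin_add_mul_cot two_ne_zero (by positivity) h0mem hY h0
    _ = 0 := by simp [sin_pi_div_six]
end

section
/- The function X ↦ (2 cos(π/3 + π/(2X)))^X is monotonically increasing for real X ≥ 3. -/
/-!
Write `X log (2 cos (π/3 + π/(2X)))` as `(π/2) · (g(π/3 + t) - g(π/3)) / t` with `g = log (2 cos)`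
and `t = π/(2X)`, using `g(π/3) = log 1 = 0`. Since `cos` is concave and positive on `(-π/2, π/2)`
and `log` is concave and increasing, `g` is concave there, so its secant slopes from `π/3` decrease
in `t`; and `t` decreases in `X`.
-/

open Real Set

theorem ConcaveOn.log {E : Type*} [AddCommMonoid E] [Module ℝ E] {s : Set E} {f : E → ℝ}
    (hf : ConcaveOn ℝ s f) (hpos : ∀ x ∈ s, 0 < f x) : ConcaveOn ℝ s (fun x => Real.log (f x)) := by
  refine ⟨hf.1, fun x hx y hy a b ha hb hab => ?_⟩
  calc a • Real.log (f x) + b • Real.log (f y)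
      ≤ Real.log (a • f x + b • f y) :=
        strictConcaveOn_log_Ioi.concaveOn.2 (hpos x hx) (hpos y hy) ha hb hab
    _ ≤ Real.log (f (a • x + b • y)) :=
        Real.log_le_log (strictConcaveOn_log_Ioi.concaveOn.1 (hpos x hx) (hpos y hy) ha hb hab)
          (hf.2 hx hy ha hb hab)

theorem concaveOn_log_two_mul_cos :
    ConcaveOn ℝ (Ioo (-(π / 2)) (π / 2)) (fun x => Real.log (2 * cos x)) :=
  ((strictConcaveOn_cos_Icc.concaveOn.subset Ioo_subset_Icc_self (convex_Ioo _ _)).smul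
    zero_le_two).log fun _ hx => mul_pos two_pos (cos_pos_of_mem_Ioo hx)

theorem pi_div_three_add_pi_div_two_mul_mem_Ioo {X : ℝ} (hX : 3 < X) :
    π / 3 + π / (2 * X) ∈ Ioo (π / 3) (π / 2) := by
  have hpX : 0 < π / (2 * X) := by positivity
  have : π / (2 * X) < π / 6 := by
    rw [div_lt_div_iff₀ (by linarith) (by norm_num)]
    nlinarith [pi_pos]
  constructor <;> linarith

theorem two_mul_cos_pi_div_three_add_pi_div_two_mul_pos {X : ℝ} (hX : 3 < X) :
    0 < 2 * cos (π / 3 + π / (2 * X)) :=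
  have h := pi_div_three_add_pi_div_two_mul_mem_Ioo hX
  mul_pos two_pos (cos_pos_of_mem_Ioo ⟨by linarith [h.1, pi_pos], h.2⟩)

theorem monotoneOn_mul_log_two_mul_cos :
    MonotoneOn (fun X : ℝ => X * Real.log (2 * cos (π / 3 + π / (2 * X)))) (Ioi 3) := by
  set g : ℝ → ℝ := fun x => Real.log (2 * cos x)
  have hg : g (π / 3) = 0 := by simp [g, cos_pi_div_three]
  have hslope : ∀ X : ℝ, 3 < X →
      X * g (π / 3 + π / (2 * X)) = π / 2 * slope g (π / 3) (π / 3 + π / (2 * X)) := by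
    intro X hX
    rw [slope_def_field, hg, sub_zero, add_sub_cancel_left]
    field_simp
  have hmem : ∀ X : ℝ, 3 < X →
      π / 3 + π / (2 * X) ∈ {y ∈ Ioo (-(π / 2)) (π / 2) | π / 3 < y} := fun X hX =>
    have h := pi_div_three_add_pi_div_two_mul_mem_Ioo hX
    ⟨⟨by linarith [h.1, pi_pos], h.2⟩, h.1⟩
  intro X hX Y hY hXY
  have hanti := concaveOn_log_two_mul_cos.antitoneOn_slope_gt
    (⟨by linarith [pi_pos], by linarith [pi_pos]⟩ : π / 3 ∈ Ioo (-(π / 2)) (π / 2))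
  simp only [mem_Ioi] at hX hY
  change X * g _ ≤ Y * g _
  rw [hslope X hX, hslope Y hY]
  gcongr
  refine hanti (hmem Y hY) (hmem X hX) (add_le_add_right ?_ _)
  gcongr

theorem stmt_5 :
    MonotoneOn (fun X : ℝ => (2 * Real.cos (π / 3 + π / (2 * X))) ^ X) (Set.Ici 3) := by
  intro X hX Y hY hXY
  rcases (mem_Ici.mp hX).eq_or_lt with rfl | h3X
  · have hzero : 2 * cos (π / 3 + π / (2 * 3)) = 0 := by
      rw [show π / 3 + π / (2 * 3) = π / 2 by ring, cos_pi_div_two, mul_zero]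
    simp only [hzero, zero_rpow (three_ne_zero : (3 : ℝ) ≠ 0)]
    rcases (mem_Ici.mp hY).eq_or_lt with rfl | h3Y
    · simp [hzero]
    · exact (rpow_pos_of_pos (two_mul_cos_pi_div_three_add_pi_div_two_mul_pos h3Y) Y).le
  · have h3Y := h3X.trans_le hXY
    dsimp only
    rw [rpow_def_of_pos (two_mul_cos_pi_div_three_add_pi_div_two_mul_pos h3X),
      rpow_def_of_pos (two_mul_cos_pi_div_three_add_pi_div_two_mul_pos h3Y), exp_le_exp,
      mul_comm (Real.log _) X, mul_comm (Real.log _) Y]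
    exact monotoneOn_mul_log_two_mul_cos h3X h3Y hXY
end
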